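/- arXiv:2001.08548 — 4 statements merged into one kernel-verified Lean document; each statement's English description precedes it below -/
import Mathlib

section
/- Let (red_u, prop_u) and (red_v, prop_v) be two labels at the same flight, and suppose red_u ≤ red_v and prop_u ≤ prop_v (weak dominance). Extend both labels along the same flight connection with slack s ∈ ℝ, incoming primary delay p ∈ ℝ, and dual values π ≥ 0 and ν ∈ ℝ, obtaining (red_u', prop_u') and (red_v', prop_v'). Then red_u' ≤ red_v' and prop_u' ≤ prop_v'; that is, weak dominance of labels is preserved under label extension. -/
/-- Weak dominance of labels is preserved under a single label extension.
A label is a pair `(red, prop)`. Extending along a connection with slack `s`,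
primary delay `p`, and dual values `π ≥ 0`, `ν` gives
`prop' = max 0 (prop + p - s)` and `red' = red + prop' * π - ν`. -/
theorem weak_dominance_preserved_under_extension
    (red_u prop_u red_v prop_v s p π ν : ℝ) (hπ : 0 ≤ π)
    (hred : red_u ≤ red_v) (hprop : prop_u ≤ prop_v) :
    red_u + (max 0 (prop_u + p - s)) * π - ν ≤
      red_v + (max 0 (prop_v + p - s)) * π - ν ∧
    max 0 (prop_u + p - s) ≤ max 0 (prop_v + p - s) := by
  constructor <;> gcongr
end

section
/- Let (red_u, prop_u) and (red_v, prop_v) be two labels at the same flight such that red_u ≤ red_v, prop_u ≤ prop_v, and at least one of these inequalities is strict (i.e., u dominates v). Extend both labels along the same flight connection with slack s ∈ ℝ, incoming primary delay p ∈ ℝ, and dual values π ≥ 0 and ν ∈ ℝ, obtaining (red_u', prop_u') and (red_v', prop_v'). If moreover red_u < red_v or prop_v + p − s > 0, then red_u' ≤ red_v', prop_u' ≤ prop_v', and at least one of these inequalities is strict; that is, the extended label u' dominates the extended label v'. -/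
/-! Both components of an extended label are monotone in the original label, the reduced cost
because `π ≥ 0`. A strict gap in reduced cost therefore survives extension unchanged, while a
strict gap in delay survives only if the clamp at `0` does not absorb the dominated label's
delay, which is exactly what `0 < prop_v + p - s` rules out. -/

structure Label where
  red : ℝ
  prop : ℝ

namespace Label

def extend (l : Label) (s p π ν : ℝ) : Label :=
  let prop' := max 0 (l.prop + p - s)
  ⟨l.red + prop' * π - ν, prop'⟩

def Dominates (u v : Label) : Prop :=
  u.red ≤ v.red ∧ u.prop ≤ v.prop ∧ (u.red < v.red ∨ u.prop < v.prop)

variable {u v : Label} {s p π ν : ℝ}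

theorem extend_prop_le (h : u.prop ≤ v.prop) :
    (u.extend s p π ν).prop ≤ (v.extend s p π ν).prop :=
  max_le_max le_rfl (by linarith)

theorem extend_prop_lt (h : u.prop < v.prop) (hpos : 0 < v.prop + p - s) :
    (u.extend s p π ν).prop < (v.extend s p π ν).prop :=
  lt_max_of_lt_right (max_lt hpos (by linarith))

theorem extend_prop_mul_le (hπ : 0 ≤ π) (h : u.prop ≤ v.prop) :
    (u.extend s p π ν).prop * π ≤ (v.extend s p π ν).prop * π :=
  mul_le_mul_of_nonneg_right (extend_prop_le h) hπ

theorem extend_red_le (hπ : 0 ≤ π) (hred : u.red ≤ v.red) (hprop : u.prop ≤ v.prop) :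
    (u.extend s p π ν).red ≤ (v.extend s p π ν).red :=
  sub_le_sub_right (add_le_add hred (extend_prop_mul_le (ν := ν) hπ hprop)) ν

theorem extend_red_lt (hπ : 0 ≤ π) (hred : u.red < v.red) (hprop : u.prop ≤ v.prop) :
    (u.extend s p π ν).red < (v.extend s p π ν).red :=
  sub_lt_sub_right (add_lt_add_of_lt_of_le hred (extend_prop_mul_le (ν := ν) hπ hprop)) ν

theorem Dominates.extend (hπ : 0 ≤ π) (h : u.Dominates v)
    (hcond : u.red < v.red ∨ 0 < v.prop + p - s) :
    (u.extend s p π ν).Dominates (v.extend s p π ν) := by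
  obtain ⟨hred, hprop, hstrict⟩ := h
  refine ⟨extend_red_le hπ hred hprop, extend_prop_le hprop, ?_⟩
  rcases hcond with hred_lt | hpos
  · exact .inl (extend_red_lt hπ hred_lt hprop)
  rcases hstrict with hred_lt | hprop_lt
  · exact .inl (extend_red_lt hπ hred_lt hprop)
  · exact .inr (extend_prop_lt hprop_lt hpos)

end Label

/-- Strict dominance of labels is preserved under label extension, provided
either the reduced-cost inequality is strict or the extended delay of the
dominated label is positive. A label is a pair `(red, prop)`; extending along
a connection with slack `s`, primary delay `p`, and dual values `π ≥ 0`, `ν`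
gives `prop' = max 0 (prop + p - s)` and `red' = red + prop' * π - ν`. -/
theorem dominance_preserved_under_extension
    (red_u prop_u red_v prop_v s p π ν : ℝ) (hπ : 0 ≤ π)
    (hred : red_u ≤ red_v) (hprop : prop_u ≤ prop_v)
    (hstrict : red_u < red_v ∨ prop_u < prop_v)
    (hcond : red_u < red_v ∨ 0 < prop_v + p - s) :
    red_u + (max 0 (prop_u + p - s)) * π - ν ≤
      red_v + (max 0 (prop_v + p - s)) * π - ν ∧
    max 0 (prop_u + p - s) ≤ max 0 (prop_v + p - s) ∧
    (red_u + (max 0 (prop_u + p - s)) * π - ν <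
        red_v + (max 0 (prop_v + p - s)) * π - ν ∨
      max 0 (prop_u + p - s) < max 0 (prop_v + p - s)) :=
  Label.Dominates.extend (u := ⟨red_u, prop_u⟩) (v := ⟨red_v, prop_v⟩) (s := s) (ν := ν) hπ
    ⟨hred, hprop, hstrict⟩ hcond
end

section
/- Let (red_u, prop_u) and (red_v, prop_v) be two labels with red_u ≤ red_v and prop_u ≤ prop_v, and let (p_1, s_1, π_1, ν_1), …, (p_k, s_k, π_k, ν_k) be any finite sequence of extension parameters with π_i ≥ 0 for every i. Apply the extension operation successively with these parameters, in order, to both labels, obtaining final labels (red_u^{(k)}, prop_u^{(k)}) and (red_v^{(k)}, prop_v^{(k)}). Then red_u^{(k)} ≤ red_v^{(k)} and prop_u^{(k)} ≤ prop_v^{(k)}; that is, weak dominance is preserved along any sequence of label extensions, so any route obtainable by successively extending v to the sink can be matched by extending u with a route of no larger reduced cost. -/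
/-! Weak dominance of labels is the componentwise order on `ℝ × ℝ`. For `π ≥ 0` a single
extension is monotone for this order, and a fold of monotone steps is monotone. -/

/-- Extending a label `(red, prop)` along a connection with parameters
`(p, s, π, ν)` produces `(red + prop' * π - ν, prop')` where
`prop' = max 0 (prop + p - s)`. -/
def extendLabel (P : ℝ × ℝ × ℝ × ℝ) (L : ℝ × ℝ) : ℝ × ℝ :=
  (L.1 + (max 0 (L.2 + P.1 - P.2.1)) * P.2.2.1 - P.2.2.2,
   max 0 (L.2 + P.1 - P.2.1))

theorem List.foldl_monotone_of_forall_mem {α β : Type*} [Preorder α] {f : α → β → α}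
    {l : List β} (H : ∀ b ∈ l, Monotone fun a ↦ f a b) :
    Monotone fun a ↦ l.foldl f a := by
  induction l with
  | nil => exact monotone_id
  | cons b l ih =>
    exact (ih fun c hc ↦ H c (List.mem_cons_of_mem b hc)).comp (H b List.mem_cons_self)

theorem monotone_extendLabel {P : ℝ × ℝ × ℝ × ℝ} (hπ : 0 ≤ P.2.2.1) :
    Monotone (extendLabel P) := by
  rintro L L' ⟨hred, hprop⟩
  have hprop' : max 0 (L.2 + P.1 - P.2.1) ≤ max 0 (L'.2 + P.1 - P.2.1) :=
    max_le_max_left 0 (by linarith)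
  refine ⟨?_, hprop'⟩
  simp only [extendLabel]
  linarith [mul_le_mul_of_nonneg_right hprop' hπ]

/-- Weak dominance of labels is preserved along any finite sequence of label
extensions applied, in order, to both labels (all with nonnegative `π`). -/
theorem weak_dominance_preserved_under_extension_sequence
    (red_u prop_u red_v prop_v : ℝ)
    (params : List (ℝ × ℝ × ℝ × ℝ))
    (hπ : ∀ P ∈ params, 0 ≤ P.2.2.1)
    (hred : red_u ≤ red_v) (hprop : prop_u ≤ prop_v) :
    (params.foldl (fun L P => extendLabel P L) (red_u, prop_u)).1 ≤
      (params.foldl (fun L P => extendLabel P L) (red_v, prop_v)).1 ∧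
    (params.foldl (fun L P => extendLabel P L) (red_u, prop_u)).2 ≤
      (params.foldl (fun L P => extendLabel P L) (red_v, prop_v)).2 :=
  List.foldl_monotone_of_forall_mem (fun P hP ↦ monotone_extendLabel (hπ P hP))
    (Prod.mk_le_mk.mpr ⟨hred, hprop⟩)
end

section
/- Correctness of the column-generation termination criterion: let T, F, R be finite sets (tails, flights, routes), a : R → T, b : R → Finset F, d : R → F → ℝ, e : F → ℝ, and x : F → ℝ as in the recourse linear program. Suppose (μ, ν, π) satisfies 0 ≤ π f ≤ e f for every f and the reduced cost of every route r ∈ R is nonnegative, i.e., Σ_{f ∈ b r} ((d r f) · (π f) − ν f) − μ (a r) ≥ 0 for every r ∈ R. Suppose (ŷ, ẑ) is a primal feasible solution of the recourse linear program whose objective value Σ_f (e f) · (ẑ f) equals the dual objective Σ_t μ t + Σ_f (ν f − (x f) · (π f)). Then for every primal feasible (y, z) of the recourse linear program, Σ_f (e f) · (z f) ≥ Σ_f (e f) · (ẑ f); that is, if the pricing problem finds no route with negative reduced cost, the current restricted solution is optimal for the full recourse linear program. -/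
/-!
Weak LP duality. For any feasible `(y, z)`, pairing the tail, flight and linking constraints
with the multipliers `μ`, `ν`, `π` writes the dual objective as
`∑ f, π f * (linking left-hand side of f) - ∑ r, (reduced cost of r) * y r`,
which is at most `∑ f, π f * z f ≤ ∑ f, e f * z f` because reduced costs and `y` are
nonnegative and `0 ≤ π ≤ e`. A solution attaining the dual objective is therefore optimal.
-/

open Finset

section RecourseDuality

variable {T F R : Type*} [Fintype T] [Fintype F] [Fintype R]

def reducedCost (a : R → T) (b : R → Finset F) (d : R → F → ℝ) (μ : T → ℝ) (ν π : F → ℝ)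
    (r : R) : ℝ :=
  ∑ f ∈ b r, (d r f * π f - ν f) - μ (a r)

theorem sum_sum_filter_mem_eq {M : Type*} [AddCommMonoid M] [DecidableEq F] (b : R → Finset F)
    (g : R → F → M) :
    ∑ f, ∑ r ∈ univ.filter (fun r => f ∈ b r), g r f = ∑ r, ∑ f ∈ b r, g r f :=
  (sum_comm' (by simp)).symm

theorem sum_eq_sum_mul_of_sum_fiber_eq_one {S : Type*} [CommSemiring S] [DecidableEq T]
    {a : R → T} {y : R → S} (hy : ∀ t, ∑ r ∈ univ.filter (fun r => a r = t), y r = 1)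
    (μ : T → S) :
    ∑ t, μ t = ∑ r, μ (a r) * y r := by
  rw [← sum_fiberwise univ a]
  refine sum_congr rfl fun t _ => ?_
  rw [sum_congr rfl fun r hr => by rw [(mem_filter.mp hr).2], ← mul_sum, hy t, mul_one]

theorem sum_eq_sum_sum_mul_of_sum_filter_mem_eq_one {S : Type*} [CommSemiring S] [DecidableEq F]
    {b : R → Finset F} {y : R → S} (hy : ∀ f, ∑ r ∈ univ.filter (fun r => f ∈ b r), y r = 1)
    (ν : F → S) :
    ∑ f, ν f = ∑ r, ∑ f ∈ b r, ν f * y r := by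
  rw [← sum_sum_filter_mem_eq]
  exact sum_congr rfl fun f _ => by rw [← mul_sum, hy f, mul_one]

theorem dual_objective_eq_sub_sum_reducedCost_mul [DecidableEq T] [DecidableEq F]
    (a : R → T) (b : R → Finset F) (d : R → F → ℝ) (x : F → ℝ) (μ : T → ℝ) (ν π : F → ℝ)
    {y : R → ℝ} (htail : ∀ t, ∑ r ∈ univ.filter (fun r => a r = t), y r = 1)
    (hflight : ∀ f, ∑ r ∈ univ.filter (fun r => f ∈ b r), y r = 1) :
    ∑ t, μ t + ∑ f, (ν f - x f * π f) =
      ∑ f, π f * (∑ r ∈ univ.filter (fun r => f ∈ b r), d r f * y r - x f) -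
        ∑ r, reducedCost a b d μ ν π r * y r := by
  have hdelay : ∑ f, π f * ∑ r ∈ univ.filter (fun r => f ∈ b r), d r f * y r =
      ∑ r, ∑ f ∈ b r, d r f * π f * y r := by
    simp_rw [mul_sum, ← sum_sum_filter_mem_eq b, mul_left_comm (π _), mul_assoc]
  simp only [reducedCost, sub_mul, sum_mul, mul_sub, sum_sub_distrib]
  rw [sum_eq_sum_mul_of_sum_fiber_eq_one htail μ,
    sum_eq_sum_sum_mul_of_sum_filter_mem_eq_one hflight ν, hdelay]
  simp only [mul_comm (x _) (π _)]
  ring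

theorem dual_objective_le_of_reducedCost_nonneg [DecidableEq T] [DecidableEq F]
    (a : R → T) (b : R → Finset F) (d : R → F → ℝ) (x : F → ℝ) (μ : T → ℝ) (ν π : F → ℝ)
    (hπ : ∀ f, 0 ≤ π f) (hrc : ∀ r, 0 ≤ reducedCost a b d μ ν π r)
    {y : R → ℝ} {z : F → ℝ} (hy : ∀ r, 0 ≤ y r)
    (htail : ∀ t, ∑ r ∈ univ.filter (fun r => a r = t), y r = 1)
    (hflight : ∀ f, ∑ r ∈ univ.filter (fun r => f ∈ b r), y r = 1)
    (hlink : ∀ f, ∑ r ∈ univ.filter (fun r => f ∈ b r), d r f * y r - x f ≤ z f) :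
    ∑ t, μ t + ∑ f, (ν f - x f * π f) ≤ ∑ f, π f * z f := by
  rw [dual_objective_eq_sub_sum_reducedCost_mul a b d x μ ν π htail hflight]
  have hpricing : 0 ≤ ∑ r, reducedCost a b d μ ν π r * y r :=
    sum_nonneg fun r _ => mul_nonneg (hrc r) (hy r)
  have hdelay : ∑ f, π f * (∑ r ∈ univ.filter (fun r => f ∈ b r), d r f * y r - x f) ≤
      ∑ f, π f * z f :=
    sum_le_sum fun f _ => mul_le_mul_of_nonneg_left (hlink f) (hπ f)
  linarith

end RecourseDuality

theorem column_generation_termination_optimal_general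
    {T F R : Type*} [Fintype T] [Fintype F] [Fintype R]
    [DecidableEq T] [DecidableEq F]
    (a : R → T) (b : R → Finset F) (d : R → F → ℝ) (e : F → ℝ) (x : F → ℝ)
    (μ : T → ℝ) (ν : F → ℝ) (π : F → ℝ)
    (hπ0 : ∀ f, 0 ≤ π f) (hπe : ∀ f, π f ≤ e f)
    (hrc : ∀ r, 0 ≤ (∑ f ∈ b r, (d r f * π f - ν f)) - μ (a r))
    (zhat : F → ℝ)
    (hobj : ∑ f, e f * zhat f = (∑ t, μ t) + ∑ f, (ν f - x f * π f)) :
    ∀ (y : R → ℝ) (z : F → ℝ),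
      (∀ r, 0 ≤ y r) → (∀ f, 0 ≤ z f) →
      (∀ t, ∑ r ∈ Finset.univ.filter (fun r => a r = t), y r = 1) →
      (∀ f, ∑ r ∈ Finset.univ.filter (fun r => f ∈ b r), y r = 1) →
      (∀ f, (∑ r ∈ Finset.univ.filter (fun r => f ∈ b r), d r f * y r) - x f ≤ z f) →
      ∑ f, e f * zhat f ≤ ∑ f, e f * z f := by
  intro y z hy hz htail hflight hlink
  calc ∑ f, e f * zhat f = ∑ t, μ t + ∑ f, (ν f - x f * π f) := hobj
    _ ≤ ∑ f, π f * z f :=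
      dual_objective_le_of_reducedCost_nonneg a b d x μ ν π hπ0 hrc hy htail hflight hlink
    _ ≤ ∑ f, e f * z f := sum_le_sum fun f _ => mul_le_mul_of_nonneg_right (hπe f) (hz f)

/-- Correctness of the column-generation termination criterion: if every route
has nonnegative reduced cost with respect to duals `(μ, ν, π)` with
`0 ≤ π ≤ e`, and `(yhat, zhat)` is a primal feasible solution whose objective
equals the dual objective, then `(yhat, zhat)` is optimal for the full
recourse LP. -/
theorem column_generation_termination_optimal
    {T F R : Type*} [Fintype T] [Fintype F] [Fintype R]
    [DecidableEq T] [DecidableEq F]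
    (a : R → T) (b : R → Finset F) (d : R → F → ℝ) (e : F → ℝ) (x : F → ℝ)
    (μ : T → ℝ) (ν : F → ℝ) (π : F → ℝ)
    (hπ0 : ∀ f, 0 ≤ π f) (hπe : ∀ f, π f ≤ e f)
    (hrc : ∀ r, 0 ≤ (∑ f ∈ b r, (d r f * π f - ν f)) - μ (a r))
    (yhat : R → ℝ) (zhat : F → ℝ)
    (hyhat : ∀ r, 0 ≤ yhat r) (hzhat : ∀ f, 0 ≤ zhat f)
    (hhattail : ∀ t, ∑ r ∈ Finset.univ.filter (fun r => a r = t), yhat r = 1)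
    (hhatflight : ∀ f, ∑ r ∈ Finset.univ.filter (fun r => f ∈ b r), yhat r = 1)
    (hhatlink : ∀ f, (∑ r ∈ Finset.univ.filter (fun r => f ∈ b r), d r f * yhat r) - x f ≤ zhat f)
    (hobj : ∑ f, e f * zhat f = (∑ t, μ t) + ∑ f, (ν f - x f * π f)) :
    ∀ (y : R → ℝ) (z : F → ℝ),
      (∀ r, 0 ≤ y r) → (∀ f, 0 ≤ z f) →
      (∀ t, ∑ r ∈ Finset.univ.filter (fun r => a r = t), y r = 1) →
      (∀ f, ∑ r ∈ Finset.univ.filter (fun r => f ∈ b r), y r = 1) →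
      (∀ f, (∑ r ∈ Finset.univ.filter (fun r => f ∈ b r), d r f * y r) - x f ≤ z f) →
      ∑ f, e f * zhat f ≤ ∑ f, e f * z f :=
  column_generation_termination_optimal_general a b d e x μ ν π hπ0 hπe hrc zhat hobj
end
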